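/- arXiv:1304.5763 — 6 statements merged into one kernel-verified Lean document; each statement's English description precedes it below -/
import Mathlib

section
/- Let r ≥ 2 be a natural number, q = 2r − 1, and for n ≥ 1 let μₙ be the element of the group algebra ℂ[F_r] given by μₙ = (1/((q+1)q^{n−1})) ∑_{|x|=n} x (the sum over all elements of word length n), with μ₀ the identity element. Then for every n ≥ 1, the convolution product satisfies μ₁ * μₙ = (1/(q+1))·μ_{n−1} + (q/(q+1))·μ_{n+1}. -/
/-!
Write `μ 1` as the uniform combination of the `2r` letters. For `z ≠ 1` exactly one letter
(the inverse of the first letter of `z`) shortens `z`, and the other `q = 2r - 1` lengthen it; for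
`z = 1` all `q + 1` letters produce words of length `1`. Hence the coefficient of `μ 1 * μ n` at `z`
is a combination of the coefficients of `μ n` at lengths `|z| ± 1`, and the recursion reduces to
the sphere sizes satisfying `|E₁| = q + 1` and `|Eₙ₊₁| = q |Eₙ|`.
-/

noncomputable section

/-- Word length of an element of a free group. -/
def wordLength {α : Type*} [DecidableEq α] (x : FreeGroup α) : ℕ :=
  x.toWord.length

open FreeGroup MonoidAlgebra

namespace FreeGroup

variable {α : Type*} [DecidableEq α]

@[simp]
lemma wordLength_one : wordLength (1 : FreeGroup α) = 0 := rfl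

lemma wordLength_eq_zero_iff {x : FreeGroup α} : wordLength x = 0 ↔ x = 1 := norm_eq_zero

@[simp]
lemma wordLength_mk_singleton (s : α × Bool) : wordLength (mk [s]) = 1 := rfl

lemma mk_singleton_injective : Function.Injective (fun s : α × Bool ↦ mk [s]) := fun s t h ↦ by
  simpa [toWord_mk, reduce_singleton] using congrArg toWord h

lemma wordLength_eq_one_iff {x : FreeGroup α} : wordLength x = 1 ↔ ∃ s, x = mk [s] := by
  refine ⟨fun h ↦ ?_, ?_⟩
  · obtain ⟨s, hs⟩ := List.length_eq_one_iff.mp h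
    exact ⟨s, by rw [← hs, mk_toWord]⟩
  · rintro ⟨s, rfl⟩
    rfl

lemma wordLength_mk_singleton_mul {s : α × Bool} {z : FreeGroup α} {hd : α × Bool}
    {tl : List (α × Bool)} (hz : z.toWord = hd :: tl) :
    wordLength (mk [s] * z) = if s = (hd.1, !hd.2) then wordLength z - 1 else wordLength z + 1 := by
  have hcancel : (s.1 = hd.1 ∧ s.2 = !hd.2) ↔ s = (hd.1, !hd.2) := by rw [Prod.ext_iff]
  simp only [wordLength, toWord_mul, toWord_mk, reduce_singleton, List.singleton_append]
  rw [reduce.cons, reduce_toWord, hz]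
  simp only [hcancel]
  split_ifs <;> simp

lemma sum_wordLength_mk_singleton_mul [Fintype α] {M : Type*} [AddCommMonoid M] (g : ℕ → M)
    {z : FreeGroup α} (hz : z ≠ 1) :
    ∑ s : α × Bool, g (wordLength (mk [s] * z)) =
      g (wordLength z - 1) + (Fintype.card (α × Bool) - 1) • g (wordLength z + 1) := by
  obtain ⟨hd, tl, hw⟩ := List.exists_cons_of_ne_nil (mt toWord_eq_nil_iff.mp hz)
  have hrest : ∀ s ∈ ({(hd.1, !hd.2)}ᶜ : Finset (α × Bool)),
      g (wordLength (mk [s] * z)) = g (wordLength z + 1) := fun s hs ↦ by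
    rw [wordLength_mk_singleton_mul hw, if_neg (by simpa using hs)]
  rw [Fintype.sum_eq_add_sum_compl (hd.1, !hd.2), wordLength_mk_singleton_mul hw, if_pos rfl,
    Finset.sum_congr rfl hrest, Finset.sum_const, Finset.card_compl, Finset.card_singleton]

end FreeGroup

namespace MonoidAlgebra

variable {k α : Type*} [Semiring k] [Fintype α]

lemma coeff_sum_single_mk_singleton_mul (a : k) (f : k[FreeGroup α]) (z : FreeGroup α) :
    ((∑ s : α × Bool, single (mk [s]) a) * f).coeff z =
      a * ∑ s : α × Bool, f.coeff (mk [s] * z) := by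
  simp only [Finset.sum_mul, coeff_sum, Finsupp.finsetSum_apply, coeff_single_mul_apply,
    inv_mk, Finset.mul_sum]
  -- `(mk [s])⁻¹ = mk [(s.1, !s.2)]`, and flipping the sign permutes the letters
  exact Fintype.sum_equiv (Equiv.prodCongr (Equiv.refl α) Equiv.boolNot) _ _ fun s ↦ rfl

lemma eq_sum_single_mk_singleton [DecidableEq α] {a : k} {f : k[FreeGroup α]}
    (hf : ∀ x, f.coeff x = if wordLength x = 1 then a else 0) :
    f = ∑ s : α × Bool, single (mk [s]) a := by
  ext x
  rw [hf, coeff_sum, Finsupp.finsetSum_apply]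
  simp only [coeff_single, Finsupp.single_apply]
  split_ifs with hx
  · obtain ⟨t, rfl⟩ := wordLength_eq_one_iff.mp hx
    rw [Fintype.sum_eq_single t fun s hs ↦ if_neg (mk_singleton_injective.ne hs), if_pos rfl]
  · refine (Finset.sum_eq_zero fun s _ ↦ if_neg ?_).symm
    rintro rfl
    exact hx (wordLength_mk_singleton s)

end MonoidAlgebra

section SphereWeight

variable {K : Type*} [Field K]

/-- The coefficient of `μ n` at an element of word length `L`; for `n ≥ 1` the sphere of radius `n`
has `(q + 1) q ^ (n - 1)` elements. -/
def sphereWeight (q : K) : ℕ → ℕ → K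
  | 0, L => if L = 0 then 1 else 0
  | n + 1, L => if L = n + 1 then 1 / ((q + 1) * q ^ n) else 0

lemma mul_sphereWeight_succ_one {q : K} (hq : q + 1 ≠ 0) (k : ℕ) :
    (q + 1) * sphereWeight q (k + 1) 1 = sphereWeight q k 0 + q * sphereWeight q (k + 2) 0 := by
  rcases k with _ | k <;> simp [sphereWeight, hq]

lemma sphereWeight_succ_add_mul {q : K} (hq : q ≠ 0) (k m : ℕ) :
    sphereWeight q (k + 1) m + q * sphereWeight q (k + 1) (m + 2) =
      sphereWeight q k (m + 1) + q * sphereWeight q (k + 2) (m + 1) := by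
  rcases k with _ | k <;> simp only [sphereWeight] <;> split_ifs <;>
    first | contradiction | omega | (field_simp <;> ring)

end SphereWeight

theorem mu_one_conv_mu_n (r : ℕ) (hr : 2 ≤ r) (q : ℂ) (hq : q = 2 * r - 1)
    (μ : ℕ → MonoidAlgebra ℂ (FreeGroup (Fin r)))
    (hμ0 : μ 0 = 1)
    (hμ : ∀ n : ℕ, 1 ≤ n → ∀ x : FreeGroup (Fin r),
      (μ n).coeff x = if wordLength x = n then 1 / ((q + 1) * q ^ (n - 1)) else 0)
    (n : ℕ) (hn : 1 ≤ n) :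
    μ 1 * μ n = (1 / (q + 1)) • μ (n - 1) + (q / (q + 1)) • μ (n + 1) := by
  obtain ⟨k, rfl⟩ : ∃ k, n = k + 1 := ⟨n - 1, by omega⟩
  have hq0 : q ≠ 0 := by rw [hq, sub_ne_zero]; exact_mod_cast (by omega : 2 * r ≠ 1)
  have hq1 : q + 1 ≠ 0 := by rw [hq, sub_add_cancel]; exact_mod_cast (by omega : 2 * r ≠ 0)
  have hcard : (Fintype.card (Fin r × Bool) : ℂ) = q + 1 := by simp [hq]; ring
  have hμ' : ∀ m x, (μ m).coeff x = sphereWeight q m (wordLength x) := by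
    rintro (_ | m) x
    · simp [hμ0, sphereWeight, one_def, Finsupp.single_apply, wordLength_eq_zero_iff, eq_comm]
    · simp [hμ _ m.succ_pos, sphereWeight]
  have hμ1 : μ 1 = ∑ s, single (mk [s]) (1 / (q + 1)) :=
    eq_sum_single_mk_singleton (by simpa [sphereWeight] using hμ' 1)
  ext z
  rw [hμ1, coeff_sum_single_mk_singleton_mul, coeff_add, Finsupp.add_apply, coeff_smul_apply,
    coeff_smul_apply, smul_eq_mul, smul_eq_mul]
  simp only [hμ', Nat.add_sub_cancel]
  rcases eq_or_ne z 1 with rfl | hz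
  · simp only [mul_one, wordLength_mk_singleton, wordLength_one, Finset.sum_const,
      Finset.card_univ, nsmul_eq_mul, hcard, mul_sphereWeight_succ_one hq1]
    ring
  · obtain ⟨m, hm⟩ : ∃ m, wordLength z = m + 1 :=
      Nat.exists_eq_succ_of_ne_zero (mt wordLength_eq_zero_iff.mp hz)
    rw [sum_wordLength_mk_singleton_mul _ hz, hm, Nat.add_sub_cancel, nsmul_eq_mul,
      Nat.cast_pred (by simp; omega), hcard, add_sub_cancel_right, sphereWeight_succ_add_mul hq0]
    ring
end
end

section
/- Let r ≥ 2 be a natural number, q = 2r − 1, and for n ≥ 1 let μₙ ∈ ℂ[F_r] be μₙ = (1/((q+1)q^{n−1})) ∑_{|x|=n} x, with μ₀ the identity. Let Pₙ be the polynomials defined by P₀(x) = 1, P₁(x) = x, P_{n+1}(x) = ((q+1)/q)·x·Pₙ(x) − (1/q)·P_{n−1}(x). Then μₙ = Pₙ(μ₁) in ℂ[F_r] for every n ∈ ℕ, where Pₙ(μ₁) denotes evaluation of the polynomial Pₙ at μ₁ in the algebra ℂ[F_r]. -/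
noncomputable section

/-- The spherical polynomials `Pₙ` (with complex coefficients) for the
parameter `q`: `P₀ = 1`, `P₁ = X`,
`P_{n+2} = ((q+1)/q)·X·P_{n+1} − (1/q)·Pₙ`. -/
def Ppoly (q : ℂ) : ℕ → Polynomial ℂ
  | 0 => 1
  | 1 => Polynomial.X
  | (n + 2) => Polynomial.C ((q + 1) / q) * (Polynomial.X * Ppoly q (n + 1))
      - Polynomial.C (1 / q) * Ppoly q n

/-!
Let `S` be the sum of the `2r` letters (generators and their inverses) in `ℂ[F_r]`. Left
multiplication by a letter changes the length of a reduced word by one, and it shortens a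
nonempty word for exactly one of the `2r` letters. Hence `S` acts on functions of the word length
as the adjacency operator of the `(q + 1)`-regular tree, which gives `S μ₀ = (q + 1) μ₁` and
`S μ_{m+1} = μ_m + q μ_{m+2}`. As `μ₁ = S / (q + 1)`, this is the recurrence defining `Pₙ`.
-/

open FreeGroup MonoidAlgebra

namespace FreeGroup

theorem mk_singleton_inv {α : Type*} (p : α × Bool) : (mk [p])⁻¹ = mk [(p.1, !p.2)] := by
  simp [inv_mk, invRev]

variable {α : Type*} [DecidableEq α]

theorem toWord_mk_singleton_mul (p : α × Bool) (x : FreeGroup α) :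
    (mk [p] * x).toWord =
      if x.toWord.head? = some (p.1, !p.2) then x.toWord.tail else p :: x.toWord := by
  rw [toWord_mul, toWord_mk, reduce_singleton, List.singleton_append, reduce.cons,
    reduce_toWord]
  rcases x.toWord with _ | ⟨hd, tl⟩
  · rfl
  · simp [Prod.ext_iff, eq_comm, Bool.eq_not_iff]

theorem norm_mk_singleton_inv_mul (p : α × Bool) (x : FreeGroup α) :
    ((mk [p])⁻¹ * x).norm = if x.toWord.head? = some p then x.norm - 1 else x.norm + 1 := by
  rw [mk_singleton_inv, norm, toWord_mk_singleton_mul, Bool.not_not]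
  split_ifs <;> simp [norm]

end FreeGroup

/-- The adjacency operator of the `(q + 1)`-regular tree, acting on functions of the distance
to the root. -/
def radialAdjacency {R : Type*} [Semiring R] (q : R) (c : ℕ → R) : ℕ → R
  | 0 => (q + 1) * c 1
  | k + 1 => c k + q * c (k + 2)

section GeneratorSum

variable (R : Type*) [Ring R] (α : Type*) [DecidableEq α] [Fintype α]

def generatorSum : MonoidAlgebra R (FreeGroup α) := ∑ p : α × Bool, single (mk [p]) 1

variable {R α}

theorem coeff_generatorSum_mul_of_radial {c : ℕ → R} {f : MonoidAlgebra R (FreeGroup α)}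
    (hf : ∀ x, f.coeff x = c x.norm) (x : FreeGroup α) :
    (generatorSum R α * f).coeff x = radialAdjacency (2 * Fintype.card α - 1 : R) c x.norm := by
  have hsum : (generatorSum R α * f).coeff x = ∑ p : α × Bool, c ((mk [p])⁻¹ * x).norm := by
    simp [generatorSum, Finset.sum_mul, coeff_single_mul_apply, hf]
  simp only [hsum, norm_mk_singleton_inv_mul, apply_ite c]
  rcases hx : x.toWord with _ | ⟨hd, tl⟩
  · simp [FreeGroup.norm, hx, radialAdjacency, Nat.cast_comm]
  · have hother : ∀ p ∈ ({hd}ᶜ : Finset (α × Bool)), ¬ hd = p := by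
      simp [eq_comm]
    have hcard : 1 ≤ Fintype.card α * 2 := by
      have := Fintype.card_pos_iff.mpr ⟨hd.1⟩
      omega
    simp [FreeGroup.norm, hx, radialAdjacency, Fintype.sum_eq_add_sum_compl hd,
      Finset.sum_ite_of_false hother, Finset.card_compl, Nat.cast_sub hcard, Nat.cast_comm]

end GeneratorSum

theorem two_mul_card_sub_one_ne_zero (K α : Type*) [Ring K] [CharZero K] [Fintype α]
    [Nonempty α] : (2 * Fintype.card α - 1 : K) ≠ 0 := by
  intro h
  have h2 : ((2 * Fintype.card α : ℕ) : K) = (1 : ℕ) := by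
    push_cast
    exact sub_eq_zero.mp h
  have := Fintype.card_pos (α := α)
  rw [Nat.cast_inj] at h2
  omega

section Spheres

variable {K : Type*} [Field K]

/-- The size of the sphere of radius `m` in the `(q + 1)`-regular tree. -/
def sphereSize (q : K) : ℕ → K
  | 0 => 1
  | m + 1 => (q + 1) * q ^ m

theorem sphereSize_succ_succ (q : K) (m : ℕ) :
    sphereSize q (m + 2) = q * sphereSize q (m + 1) := by
  simp only [sphereSize]
  ring

def sphereCoeff (q : K) (m k : ℕ) : K := if k = m then (sphereSize q m)⁻¹ else 0

variable {q : K}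

theorem radialAdjacency_sphereCoeff_zero (hq1 : q + 1 ≠ 0) (k : ℕ) :
    radialAdjacency q (sphereCoeff q 0) k = (q + 1) * sphereCoeff q 1 k := by
  rcases k with _ | _ | k <;> simp [radialAdjacency, sphereCoeff, sphereSize, hq1]

theorem radialAdjacency_sphereCoeff_succ (hq0 : q ≠ 0) (hq1 : q + 1 ≠ 0) (m k : ℕ) :
    radialAdjacency q (sphereCoeff q (m + 1)) k =
      sphereCoeff q m k + q * sphereCoeff q (m + 2) k := by
  rcases k with _ | k
  · rcases m with _ | m <;> simp [radialAdjacency, sphereCoeff, sphereSize, hq1]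
  · simp only [radialAdjacency, sphereCoeff]
    by_cases hk : k = m + 1
    · subst hk
      simp [sphereSize_succ_succ, show m + 1 + 1 ≠ m by omega]
      field_simp
    · by_cases hm : m = k + 1
      · subst hm
        simp [sphereSize_succ_succ, show k ≠ k + 1 + 1 by omega]
        field_simp
      · rw [if_neg hk, if_neg (by omega), if_neg (by omega), if_neg (by omega)]

variable {α : Type*} [DecidableEq α]

theorem coeff_one_eq_sphereCoeff_zero (q : K) (x : FreeGroup α) :
    (1 : MonoidAlgebra K (FreeGroup α)).coeff x = sphereCoeff q 0 x.norm := by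
  simp [one_def, coeff_single, Finsupp.single_apply, sphereCoeff, sphereSize, eq_comm]

def IsSphereMeans (q : K) (μ : ℕ → MonoidAlgebra K (FreeGroup α)) : Prop :=
  ∀ m x, (μ m).coeff x = sphereCoeff q m x.norm

namespace IsSphereMeans

variable {μ : ℕ → MonoidAlgebra K (FreeGroup α)}

theorem zero_eq_one (hμ : IsSphereMeans q μ) : μ 0 = 1 := by
  ext x
  rw [hμ 0, coeff_one_eq_sphereCoeff_zero q]

variable [Fintype α] [Nonempty α] [CharZero K]

theorem generatorSum_mul_zero (hμ : IsSphereMeans q μ) (hq : q = 2 * Fintype.card α - 1) :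
    generatorSum K α * μ 0 = (q + 1) • μ 1 := by
  have hq1 : q + 1 ≠ 0 := by simp [hq]
  ext x
  rw [coeff_generatorSum_mul_of_radial (hμ 0), coeff_smul, Finsupp.smul_apply, smul_eq_mul,
    hμ 1, ← hq, radialAdjacency_sphereCoeff_zero hq1]

theorem generatorSum_mul_succ (hμ : IsSphereMeans q μ) (hq : q = 2 * Fintype.card α - 1)
    (m : ℕ) : generatorSum K α * μ (m + 1) = μ m + q • μ (m + 2) := by
  have hq1 : q + 1 ≠ 0 := by simp [hq]
  have hq0 : q ≠ 0 := hq ▸ two_mul_card_sub_one_ne_zero _ α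
  ext x
  rw [coeff_generatorSum_mul_of_radial (hμ (m + 1)), coeff_add, coeff_smul, Finsupp.add_apply,
    Finsupp.smul_apply, smul_eq_mul, hμ m, hμ (m + 2), ← hq,
    radialAdjacency_sphereCoeff_succ hq0 hq1]

end IsSphereMeans

end Spheres

theorem IsSphereMeans.aeval_Ppoly {α : Type*} [DecidableEq α] [Fintype α] [Nonempty α] {q : ℂ}
    {μ : ℕ → MonoidAlgebra ℂ (FreeGroup α)} (hμ : IsSphereMeans q μ)
    (hq : q = 2 * Fintype.card α - 1) (n : ℕ) : Polynomial.aeval (μ 1) (Ppoly q n) = μ n := by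
  have hq0 : q ≠ 0 := hq ▸ two_mul_card_sub_one_ne_zero _ α
  have hq1 : q + 1 ≠ 0 := by simp [hq]
  have hμ1 : μ 1 = (q + 1)⁻¹ • generatorSum ℂ α := by
    rw [← mul_one (generatorSum ℂ α), ← hμ.zero_eq_one, hμ.generatorSum_mul_zero hq, smul_smul,
      inv_mul_cancel₀ hq1, one_smul]
  induction n using Nat.twoStepInduction with
  | zero => simp [Ppoly, hμ.zero_eq_one]
  | one => simp [Ppoly]
  | more n ih0 ih1 =>
    calc Polynomial.aeval (μ 1) (Ppoly q (n + 2))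
        = ((q + 1) / q) • (μ 1 * μ (n + 1)) - (1 / q) • μ n := by
          simp [Ppoly, ih0, ih1, Algebra.smul_def]
      _ = q⁻¹ • (generatorSum ℂ α * μ (n + 1)) - q⁻¹ • μ n := by
          rw [hμ1, smul_mul_assoc, smul_smul,
            show (q + 1) / q * (q + 1)⁻¹ = q⁻¹ by field_simp, one_div]
      _ = μ (n + 2) := by
          rw [hμ.generatorSum_mul_succ hq, smul_add, smul_smul, inv_mul_cancel₀ hq0, one_smul,
            add_sub_cancel_left]

theorem mu_n_eq_P_n_mu_one (r : ℕ) (hr : 2 ≤ r) (q : ℂ) (hq : q = 2 * r - 1)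
    (μ : ℕ → MonoidAlgebra ℂ (FreeGroup (Fin r)))
    (hμ0 : μ 0 = 1)
    (hμ : ∀ n : ℕ, 1 ≤ n → ∀ x : FreeGroup (Fin r),
      (μ n).coeff x = if wordLength x = n then 1 / ((q + 1) * q ^ (n - 1)) else 0)
    (n : ℕ) :
    Polynomial.aeval (μ 1) (Ppoly q n) = μ n := by
  have : Nonempty (Fin r) := ⟨⟨0, by omega⟩⟩
  have hsphere : IsSphereMeans q μ := by
    rintro (_ | m) x
    · rw [hμ0, coeff_one_eq_sphereCoeff_zero]
    · rw [hμ (m + 1) m.succ_pos x]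
      simp [wordLength, FreeGroup.norm, sphereCoeff, sphereSize]
  exact hsphere.aeval_Ppoly (by simpa using hq) n
end
end

section
/- Let F_∞ be the free group on countably infinitely many generators and let s be a real number. Then the function x ↦ s^{|x|} on F_∞ is positive definite if and only if −1 ≤ s ≤ 1. -/
open scoped ComplexOrder

noncomputable section

/-- A function on a group is positive definite if all the associated quadratic
sums are nonnegative (real) numbers. -/
def IsPositiveDefinite {G : Type*} [Group G] (φ : G → ℂ) : Prop :=
  ∀ (n : ℕ) (x : Fin n → G) (c : Fin n → ℂ),
    0 ≤ ∑ j, ∑ k, c j * (starRingEnd ℂ) (c k) * φ ((x k)⁻¹ * x j)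

/-!
Necessity is the positivity of the 2 × 2 sums at the points `1` and a generator `a`, with
coefficients `(1, ±1)`: they equal `2 ± 2s`.

Sufficiency is Haagerup's construction. Send `x` to the finitely supported function `ξ_x` on
reduced words that vanishes off the prefixes `v` of `x` and takes the value
`w(|v|) s^(|x| - |v|)` there, where `w(0) = 1` and `w(i) = √(1 - s²)` for `i > 0`. If `p` is the
longest common prefix of `x = p u` and `y = p w`, then `x⁻¹ y = u⁻¹ w` is reduced as written, so
`|x⁻¹ y| = |u| + |w|`, while `∑_v ξ_x(v) ξ_y(v) = s^(|u| + |w|) ∑_{i ≤ |p|} w(i)² s^(2(|p| - i))`,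
and the last sum telescopes to `1` as a geometric sum. Hence `s^|x⁻¹ y|` is a Gram kernel.
-/

open Finset

section PositiveDefinite

variable {G : Type*} [Group G] {φ : G → ℂ}

theorem isPositiveDefinite_of_eq_sum_star_mul {ι : Type*} (ξ : G → ι → ℂ) (T : G → Finset ι)
    (hξ : ∀ x, ∀ v ∉ T x, ξ x v = 0)
    (hφ : ∀ x y, φ (x⁻¹ * y) = ∑ v ∈ T x, star (ξ x v) * ξ y v) :
    IsPositiveDefinite φ := by
  intro n x c
  classical
  set U := univ.biUnion fun j => T (x j)
  have hU : ∀ j k, φ ((x k)⁻¹ * x j) = ∑ v ∈ U, star (ξ (x k) v) * ξ (x j) v := fun j k => by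
    rw [hφ]
    refine sum_subset (subset_biUnion_of_mem (fun j => T (x j)) (mem_univ k)) fun v _ hv => ?_
    rw [hξ _ v hv, star_zero, zero_mul]
  calc (0 : ℂ) ≤ ∑ v ∈ U, (∑ j, c j * ξ (x j) v) * star (∑ k, c k * ξ (x k) v) :=
        sum_nonneg fun v _ => mul_star_self_nonneg _
    _ = _ := by
      simp_rw [hU, star_sum, sum_mul_sum, mul_sum, star_mul', starRingEnd_apply]
      rw [sum_comm]
      refine sum_congr rfl fun j _ => ?_
      rw [sum_comm]
      refine sum_congr rfl fun k _ => sum_congr rfl fun v _ => by ring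

theorem IsPositiveDefinite.nonneg_pair (h : IsPositiveDefinite φ) (g : G) (c : ℂ) :
    0 ≤ φ 1 + c * φ g + star c * φ g⁻¹ + c * star c * φ 1 := by
  have := h 2 ![1, g] ![1, c]
  simp only [Fin.sum_univ_two, Matrix.cons_val_zero, Matrix.cons_val_one, inv_one, one_mul,
    mul_one, inv_mul_cancel, starRingEnd_apply, star_one] at this
  convert this using 1
  ring

end PositiveDefinite

namespace List

variable {β : Type*}

theorem exists_common_prefix_head_ne :
    ∀ (l₁ l₂ : List β), ∃ p u w, l₁ = p ++ u ∧ l₂ = p ++ w ∧ ∀ a ∈ u.head?, ∀ b ∈ w.head?, a ≠ b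
  | a :: l₁, b :: l₂ => by
    by_cases hab : a = b
    · obtain ⟨p, u, w, rfl, rfl, hne⟩ := exists_common_prefix_head_ne l₁ l₂
      exact ⟨a :: p, u, w, rfl, by rw [hab]; rfl, hne⟩
    · exact ⟨[], a :: l₁, b :: l₂, rfl, rfl, by simpa⟩
  | [], l₂ => ⟨[], [], l₂, rfl, rfl, by simp⟩
  | l₁, [] => ⟨[], l₁, [], by simp, rfl, by simp⟩

theorem IsPrefix.of_append_of_head_ne {v p u w : List β}
    (hne : ∀ a ∈ u.head?, ∀ b ∈ w.head?, a ≠ b) (hu : v <+: p ++ u) (hw : v <+: p ++ w) :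
    v <+: p := by
  induction p generalizing v with
  | nil =>
    cases v with
    | nil => exact nil_prefix
    | cons a v =>
      obtain ⟨t, rfl⟩ := hu
      obtain ⟨t', rfl⟩ := hw
      simp at hne
  | cons c p ih =>
    cases v with
    | nil => exact nil_prefix
    | cons a v =>
      simp only [cons_append, cons_prefix_cons] at hu hw ⊢
      exact ⟨hu.1, ih hu.2 hw.2⟩

section Prefixes

variable [DecidableEq β]

def prefixes (l : List β) : Finset (List β) :=
  (Finset.range (l.length + 1)).image fun i => l.take i

theorem mem_prefixes {v l : List β} : v ∈ l.prefixes ↔ v <+: l := by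
  refine ⟨?_, fun h => Finset.mem_image.mpr
    ⟨v.length, Finset.mem_range.mpr ?_, (prefix_iff_eq_take.mp h).symm⟩⟩
  · rw [prefixes, Finset.mem_image]
    rintro ⟨i, -, rfl⟩
    exact take_prefix i l
  · exact Nat.lt_succ_of_le h.length_le

theorem sum_prefixes_length {M : Type*} [AddCommMonoid M] (l : List β) (g : ℕ → M) :
    ∑ v ∈ l.prefixes, g v.length = ∑ i ∈ Finset.range (l.length + 1), g i := by
  have hlen : ∀ i ∈ Finset.range (l.length + 1), (l.take i).length = i := fun i hi =>
    length_take_of_le (Nat.lt_succ_iff.mp (Finset.mem_range.mp hi))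
  rw [prefixes, sum_image fun i hi j hj hij => by rw [← hlen i hi, ← hlen j hj, hij]]
  exact sum_congr rfl fun i hi => by rw [hlen i hi]

end Prefixes

end List

namespace FreeGroup

variable {α : Type*} [DecidableEq α]

theorem IsReduced.invRev {L : List (α × Bool)} (h : IsReduced L) : IsReduced (invRev L) := by
  rw [isReduced_iff_reduce_eq, reduce_invRev, h.reduce_eq]

theorem IsReduced.invRev_append {u w : List (α × Bool)} (hu : IsReduced u) (hw : IsReduced w)
    (hne : ∀ a ∈ u.head?, ∀ b ∈ w.head?, a ≠ b) : IsReduced (FreeGroup.invRev u ++ w) := by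
  refine List.isChain_append.mpr ⟨hu.invRev, hw, fun a ha b hb h₁ => ?_⟩
  rw [FreeGroup.invRev, List.getLast?_reverse, List.head?_map, Option.mem_map] at ha
  obtain ⟨a, ha, rfl⟩ := ha
  have := hne a ha b hb
  grind

theorem wordLength_inv_mul_of_toWord_eq {x y : FreeGroup α} {p u w : List (α × Bool)}
    (hx : x.toWord = p ++ u) (hy : y.toWord = p ++ w)
    (hne : ∀ a ∈ u.head?, ∀ b ∈ w.head?, a ≠ b) :
    wordLength (x⁻¹ * y) = u.length + w.length := by
  have hu : IsReduced u := isReduced_toWord.infix (hx ▸ List.suffix_append p u).isInfix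
  have hw : IsReduced w := isReduced_toWord.infix (hy ▸ List.suffix_append p w).isInfix
  have hxy : x⁻¹ * y = mk (invRev u ++ w) :=
    calc x⁻¹ * y = (mk p * mk u)⁻¹ * (mk p * mk w) := by
          rw [mul_mk, mul_mk, ← hx, ← hy, mk_toWord, mk_toWord]
      _ = (mk u)⁻¹ * mk w := by group
      _ = mk (invRev u ++ w) := by rw [inv_mk, mul_mk]
  rw [wordLength, hxy, toWord_mk, (hu.invRev_append hw hne).reduce_eq, List.length_append,
    invRev_length]

end FreeGroup

section Haagerup

variable {α : Type*} [DecidableEq α] {s : ℝ}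

def haagerupWeight (s : ℝ) (i : ℕ) : ℝ :=
  if i = 0 then 1 else √(1 - s ^ 2)

theorem sum_haagerupWeight_sq_mul_pow (hs : s ^ 2 ≤ 1) (m : ℕ) :
    ∑ i ∈ range (m + 1), haagerupWeight s i ^ 2 * (s ^ 2) ^ (m - i) = 1 := by
  have hw : ∀ i, haagerupWeight s (i + 1) ^ 2 = 1 - s ^ 2 := fun i => by
    rw [haagerupWeight, if_neg i.succ_ne_zero, Real.sq_sqrt (sub_nonneg.mpr hs)]
  rw [sum_range_succ', sum_congr rfl (g := fun i => (1 - s ^ 2) * (s ^ 2) ^ (m - 1 - i))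
      fun i _ => by rw [hw, Nat.sub_right_comm, Nat.sub_sub],
    ← mul_sum, sum_range_reflect (fun i => (s ^ 2) ^ i), mul_neg_geom_sum]
  simp [haagerupWeight]

def haagerupVector (s : ℝ) (x : FreeGroup α) (v : List (α × Bool)) : ℝ :=
  if v <+: x.toWord then haagerupWeight s v.length * s ^ (wordLength x - v.length) else 0

theorem sum_haagerupVector_mul (hs : s ^ 2 ≤ 1) (x y : FreeGroup α) :
    ∑ v ∈ x.toWord.prefixes, haagerupVector s x v * haagerupVector s y v =
      s ^ wordLength (x⁻¹ * y) := by
  obtain ⟨p, u, w, hx, hy, hne⟩ := List.exists_common_prefix_head_ne x.toWord y.toWord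
  have hsub : p.prefixes ⊆ x.toWord.prefixes := fun v hv => by
    rw [List.mem_prefixes, hx] at *
    exact hv.trans (List.prefix_append p u)
  have hzero : ∀ v ∈ x.toWord.prefixes, v ∉ p.prefixes →
      haagerupVector s x v * haagerupVector s y v = 0 := fun v _ hv => by
    rw [List.mem_prefixes] at hv
    by_cases hvx : v <+: x.toWord
    · have hvy : ¬ v <+: y.toWord := fun hvy =>
        hv ((hx ▸ hvx).of_append_of_head_ne hne (hy ▸ hvy))
      simp [haagerupVector, hvy]
    · simp [haagerupVector, hvx]
  have hcommon : ∀ v ∈ p.prefixes, haagerupVector s x v * haagerupVector s y v =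
      s ^ (u.length + w.length) *
        (haagerupWeight s v.length ^ 2 * (s ^ 2) ^ (p.length - v.length)) := fun v hv => by
    rw [List.mem_prefixes] at hv
    obtain ⟨d, hd⟩ := Nat.exists_eq_add_of_le hv.length_le
    simp only [haagerupVector, wordLength, hx, hy, hv.trans (List.prefix_append p u),
      hv.trans (List.prefix_append p w), if_true, List.length_append, hd]
    rw [show v.length + d + u.length - v.length = d + u.length by omega,
      show v.length + d + w.length - v.length = d + w.length by omega,
      show v.length + d - v.length = d by omega]
    ring
  rw [← sum_subset hsub hzero, sum_congr rfl hcommon, ← mul_sum,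
    List.sum_prefixes_length p fun i => haagerupWeight s i ^ 2 * (s ^ 2) ^ (p.length - i),
    sum_haagerupWeight_sq_mul_pow hs, mul_one, FreeGroup.wordLength_inv_mul_of_toWord_eq hx hy hne]

end Haagerup

theorem posdef_pow_iff (s : ℝ) :
    IsPositiveDefinite (fun x : FreeGroup ℕ => ((s ^ wordLength x : ℝ) : ℂ)) ↔
      -1 ≤ s ∧ s ≤ 1 := by
  constructor
  · intro h
    have hone : wordLength (1 : FreeGroup ℕ) = 0 := rfl
    have hgen : wordLength (FreeGroup.of 0 : FreeGroup ℕ) = 1 := rfl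
    have hgen_inv : wordLength (FreeGroup.of 0 : FreeGroup ℕ)⁻¹ = 1 := rfl
    have hplus := h.nonneg_pair (FreeGroup.of 0) 1
    have hminus := h.nonneg_pair (FreeGroup.of 0) (-1)
    norm_num [hone, hgen, hgen_inv] at hplus hminus
    norm_cast at hplus hminus
    constructor <;> linarith
  · rintro ⟨hs₁, hs₂⟩
    refine isPositiveDefinite_of_eq_sum_star_mul (fun x v => (haagerupVector s x v : ℂ))
      (fun x => x.toWord.prefixes) (fun x v hv => ?_) fun x y => ?_
    · rw [List.mem_prefixes] at hv
      simp [haagerupVector, hv]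
    · rw [← sum_haagerupVector_mul (by nlinarith) x y]
      push_cast
      simp [Complex.conj_ofReal]
end
end

section
/- Let n ∈ ℕ, let Tₙ be the Chebyshev polynomial of the first kind, and let x₀ > 1 be real. Then for every real x with |x| < x₀, (Tₙ(x₀) − Tₙ(x))/(x₀ − x) ≤ T'ₙ(x₀), where T'ₙ denotes the derivative of Tₙ. -/
/-!
By the mean value theorem the secant slope equals `T'ₙ(c)` for some `c ∈ (x, x₀)`, and `|c| ≤ x₀`,
so it suffices to show `|T'ₙ(c)| ≤ T'ₙ(x₀)`. Every derivative of `Tₙ` is a combination of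
Chebyshev polynomials `Tₘ` with coefficients in `ℕ`, which reduces the claim to `|Tₘ(y)| ≤ Tₘ(x₀)`
for `|y| ≤ x₀`, `1 ≤ x₀`. On `[-1, 1]` this is `|Tₘ| ≤ 1 ≤ Tₘ(x₀)`; outside, parity reduces it
to `y > 1`, where `Tₘ(cosh t) = cosh (m t)` is increasing.
-/

open Polynomial Polynomial.Chebyshev Real

namespace Polynomial.Chebyshev

theorem eval_T_real_le_eval_T_real (n : ℤ) {y z : ℝ} (hy : 1 ≤ y) (hyz : y ≤ z) :
    (T ℝ n).eval y ≤ (T ℝ n).eval z := by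
  have hz : 1 ≤ z := hy.trans hyz
  have harcosh : arcosh y ≤ arcosh z := (arcosh_le_arcosh (by linarith) (by linarith)).2 hyz
  rw [← cosh_arcosh hy, ← cosh_arcosh hz, T_real_cosh, T_real_cosh, cosh_le_cosh, abs_mul,
    abs_mul, abs_of_nonneg (arcosh_nonneg hy), abs_of_nonneg (arcosh_nonneg hz)]
  exact mul_le_mul_of_nonneg_left harcosh (abs_nonneg _)

theorem abs_eval_T_real_abs (n : ℤ) (y : ℝ) : |(T ℝ n).eval (|y|)| = |(T ℝ n).eval y| := by
  rcases abs_choice y with h | h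
  · rw [h]
  · rw [h, T_eval_neg, abs_mul, ← Int.cast_abs, Int.abs_negOnePow, Int.cast_one, one_mul]

theorem abs_eval_T_real_le_eval_T_real (n : ℤ) {y z : ℝ} (hz : 1 ≤ z) (hyz : |y| ≤ z) :
    |(T ℝ n).eval y| ≤ (T ℝ n).eval z := by
  rcases le_or_gt |y| 1 with hy | hy
  · exact (abs_eval_T_real_le_one n hy).trans (one_le_eval_T_real n hz)
  · calc |(T ℝ n).eval y| = |(T ℝ n).eval (|y|)| := (abs_eval_T_real_abs n y).symm
      _ = (T ℝ n).eval |y| := abs_of_nonneg (zero_le_one.trans (one_le_eval_T_real n hy.le))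
      _ ≤ (T ℝ n).eval z := eval_T_real_le_eval_T_real n hy.le hyz

theorem abs_eval_le_eval_of_mem_span_T {P : ℝ[X]}
    (hP : P ∈ Submodule.span ℕ (Set.range fun m : ℕ => T ℝ m)) {y z : ℝ} (hz : 1 ≤ z)
    (hyz : |y| ≤ z) : |P.eval y| ≤ P.eval z := by
  induction hP using Submodule.span_induction with
  | mem P hP =>
    obtain ⟨m, rfl⟩ := hP
    exact abs_eval_T_real_le_eval_T_real m hz hyz
  | zero => simp
  | add P Q _ _ hP hQ =>
    rw [eval_add, eval_add]
    exact (abs_add_le _ _).trans (add_le_add hP hQ)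
  | smul k P _ hP =>
    rw [eval_smul, eval_smul, abs_nsmul]
    exact nsmul_le_nsmul_right hP k

theorem abs_eval_iterate_derivative_T_real_le (n k : ℕ) {y z : ℝ} (hz : 1 ≤ z)
    (hyz : |y| ≤ z) :
    |(derivative^[k] (T ℝ n)).eval y| ≤ (derivative^[k] (T ℝ n)).eval z :=
  abs_eval_le_eval_of_mem_span_T
    (Submodule.span_mono (Set.image_subset_range _ _) (T_iterate_derivative_mem_span_T n k)) hz hyz

end Polynomial.Chebyshev

theorem chebyshevT_secant_le_deriv (n : ℕ) (x₀ : ℝ) (hx₀ : 1 < x₀)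
    (x : ℝ) (hx : |x| < x₀) :
    ((Polynomial.Chebyshev.T ℝ n).eval x₀ - (Polynomial.Chebyshev.T ℝ n).eval x) / (x₀ - x) ≤
      (Polynomial.derivative (Polynomial.Chebyshev.T ℝ n)).eval x₀ := by
  have hx_lt : x < x₀ := (le_abs_self x).trans_lt hx
  obtain ⟨c, ⟨hxc, hcx₀⟩, h_slope⟩ := exists_hasDerivAt_eq_slope (fun y => (T ℝ n).eval y)
    (fun y => (derivative (T ℝ n)).eval y) hx_lt (T ℝ n).continuousOn
    (fun y _ => (T ℝ n).hasDerivAt y)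
  have hc : |c| ≤ x₀ := abs_le.2 ⟨by linarith [neg_abs_le x], hcx₀.le⟩
  rw [← h_slope]
  simpa using (le_abs_self _).trans (abs_eval_iterate_derivative_T_real_le n 1 hx₀.le hc)
end

section
/- Let n ∈ ℕ, let Uₙ be the Chebyshev polynomial of the second kind, and let x₀ > 1 be real. Then for every real x with |x| < x₀, (Uₙ(x₀) − Uₙ(x))/(x₀ − x) ≤ U'ₙ(x₀), where U'ₙ denotes the derivative of Uₙ. -/
/-! The tangent gap `Dₙ = U'ₙ(x₀)(x₀ - x) - (Uₙ(x₀) - Uₙ(x))` satisfies, by the three-term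
recurrence,
`Dₙ₊₂ - Dₙ₊₁ = (Dₙ₊₁ - Dₙ) + 2(x₀ - 1)Dₙ₊₁ + 2(x₀ - x)(Uₙ₊₁(x₀) - Uₙ₊₁(x))`,
and the last term is nonnegative because `|Uₘ(x)| ≤ Uₘ(x₀)` whenever `|x| ≤ x₀` and `1 ≤ x₀`.
As `D₀ = D₁ = 0`, the increments of `D` stay nonnegative, hence so does `D`.

The bound `|Uₘ(x)| ≤ Uₘ(x₀)` combines `|Uₘ| ≤ m + 1 = Uₘ(1)` on `[-1, 1]` (from
`Uₘ₊₂ = 2Tₘ₊₂ + Uₘ` and `|Tₖ| ≤ 1`), the parity of `Uₘ`, and the monotonicity of `Uₘ` on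
`[1, ∞)`, which is another instance of the same increment argument. -/

open Polynomial Polynomial.Chebyshev

theorem monotone_nat_of_increments_grow {α : Type*} [AddCommGroup α] [LinearOrder α]
    [IsOrderedAddMonoid α] {a : ℕ → α} (h₀ : 0 ≤ a 0) (h₁ : a 0 ≤ a 1)
    (h : ∀ n, 0 ≤ a (n + 1) → a (n + 1) - a n ≤ a (n + 2) - a (n + 1)) : Monotone a := by
  have step : ∀ n, 0 ≤ a n ∧ a n ≤ a (n + 1) := by
    intro n
    induction n with
    | zero => exact ⟨h₀, h₁⟩
    | succ n ih =>
      have hpos : 0 ≤ a (n + 1) := ih.1.trans ih.2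
      exact ⟨hpos, sub_nonneg.1 ((sub_nonneg.2 ih.2).trans (h n hpos))⟩
  exact monotone_nat_of_le_succ fun n => (step n).2

noncomputable def Polynomial.tangentGap {R : Type*} [CommRing R] (p : R[X]) (x₀ x : R) : R :=
  (derivative p).eval x₀ * (x₀ - x) - (p.eval x₀ - p.eval x)

namespace Polynomial.Chebyshev

section CommRing

variable {R : Type*} [CommRing R]

theorem eval_U_natCast_add_two (n : ℕ) (t : R) :
    (U R (n + 2 : ℕ)).eval t = 2 * t * (U R (n + 1 : ℕ)).eval t - (U R n).eval t := by
  push_cast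
  simp [U_add_two]

theorem eval_derivative_U_natCast_add_two (n : ℕ) (t : R) :
    (derivative (U R (n + 2 : ℕ))).eval t =
      2 * (U R (n + 1 : ℕ)).eval t + 2 * t * (derivative (U R (n + 1 : ℕ))).eval t
        - (derivative (U R n)).eval t := by
  push_cast
  simp [U_add_two, derivative_mul]

end CommRing

theorem monotone_eval_U_of_one_le {t : ℝ} (ht : 1 ≤ t) :
    Monotone fun n : ℕ => (U ℝ n).eval t := by
  refine monotone_nat_of_increments_grow (by simp) (by simp; linarith) fun n hn => ?_
  rw [eval_U_natCast_add_two]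
  linarith [mul_nonneg (sub_nonneg.2 ht) hn]

theorem eval_U_nonneg_of_one_le {t : ℝ} (ht : 1 ≤ t) (n : ℕ) : 0 ≤ (U ℝ n).eval t :=
  zero_le_one.trans (by simpa using monotone_eval_U_of_one_le ht (Nat.zero_le n))

theorem monotoneOn_eval_U (n : ℕ) : MonotoneOn (fun x => (U ℝ n).eval x) (Set.Ici 1) := by
  intro s (hs : 1 ≤ s) t _ hst
  have key : Monotone fun n : ℕ => (U ℝ n).eval t - (U ℝ n).eval s := by
    refine monotone_nat_of_increments_grow (by simp) (by simp; linarith) fun n hn => ?_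
    have hUs := eval_U_nonneg_of_one_le hs (n + 1)
    rw [eval_U_natCast_add_two, eval_U_natCast_add_two]
    linarith [mul_nonneg (sub_nonneg.2 (hs.trans hst)) hn, mul_nonneg (sub_nonneg.2 hst) hUs]
  simpa using key (Nat.zero_le n)

theorem abs_eval_U_le_of_abs_le_one {x : ℝ} (hx : |x| ≤ 1) (n : ℕ) :
    |(U ℝ n).eval x| ≤ n + 1 := by
  induction n using Nat.twoStepInduction with
  | zero => simp
  | one => simp [abs_mul]; linarith
  | more n ih _ =>
    have hT := abs_eval_T_real_le_one (n + 2) hx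
    have hU : (U ℝ (n + 2 : ℕ)).eval x = 2 * (T ℝ (n + 2)).eval x + (U ℝ n).eval x := by
      push_cast
      rw [U_eq_two_mul_T_add_U, eval_add, eval_mul, eval_ofNat]
    rw [hU]
    calc |2 * (T ℝ (n + 2)).eval x + (U ℝ n).eval x|
        ≤ 2 * |(T ℝ (n + 2)).eval x| + |(U ℝ n).eval x| := by
          simpa [abs_mul] using abs_add_le (2 * (T ℝ (n + 2)).eval x) ((U ℝ n).eval x)
      _ ≤ (n + 2 : ℕ) + 1 := by push_cast; linarith

theorem abs_eval_U_abs (n : ℕ) (x : ℝ) : |(U ℝ n).eval (|x|)| = |(U ℝ n).eval x| := by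
  rcases abs_choice x with h | h <;> rw [h]
  rw [U_eval_neg, abs_mul]
  simp

theorem abs_eval_U_le_eval_U {x t : ℝ} (ht : 1 ≤ t) (hx : |x| ≤ t) (n : ℕ) :
    |(U ℝ n).eval x| ≤ (U ℝ n).eval t := by
  rcases le_total |x| 1 with hx₁ | hx₁
  · calc |(U ℝ n).eval x| ≤ n + 1 := abs_eval_U_le_of_abs_le_one hx₁ n
      _ = (U ℝ n).eval 1 := by simp [U_eval_one]
      _ ≤ (U ℝ n).eval t := monotoneOn_eval_U n Set.self_mem_Ici ht ht
  · calc |(U ℝ n).eval x| = (U ℝ n).eval (|x|) := by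
          rw [← abs_eval_U_abs, abs_of_nonneg (eval_U_nonneg_of_one_le hx₁ n)]
      _ ≤ (U ℝ n).eval t := monotoneOn_eval_U n hx₁ (hx₁.trans hx) hx

theorem monotone_tangentGap_U {x₀ x : ℝ} (hx₀ : 1 ≤ x₀) (hx : |x| ≤ x₀) :
    Monotone fun n : ℕ => (U ℝ n).tangentGap x₀ x := by
  refine monotone_nat_of_increments_grow (by simp [tangentGap]) (by simp [tangentGap]; linarith)
    fun n hn => ?_
  have hxx₀ : 0 ≤ x₀ - x := sub_nonneg.2 ((le_abs_self x).trans hx)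
  have hU : 0 ≤ (U ℝ (n + 1 : ℕ)).eval x₀ - (U ℝ (n + 1 : ℕ)).eval x :=
    sub_nonneg.2 ((le_abs_self _).trans (abs_eval_U_le_eval_U hx₀ hx (n + 1)))
  simp only [tangentGap, eval_derivative_U_natCast_add_two, eval_U_natCast_add_two] at hn ⊢
  linarith [mul_nonneg (sub_nonneg.2 hx₀) hn, mul_nonneg hxx₀ hU]

end Polynomial.Chebyshev

theorem chebyshevU_secant_le_deriv (n : ℕ) (x₀ : ℝ) (hx₀ : 1 < x₀)
    (x : ℝ) (hx : |x| < x₀) :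
    ((Polynomial.Chebyshev.U ℝ n).eval x₀ - (Polynomial.Chebyshev.U ℝ n).eval x) / (x₀ - x) ≤
      (Polynomial.derivative (Polynomial.Chebyshev.U ℝ n)).eval x₀ := by
  have hgap := monotone_tangentGap_U hx₀.le hx.le (Nat.zero_le n)
  rw [div_le_iff₀ (sub_pos.2 ((le_abs_self x).trans_lt hx)), ← sub_nonneg]
  simpa [tangentGap] using hgap
end

section
/- Let F_∞ be the free group on countably infinitely many generators and let ψ: F_∞ → ℝ be a radial conditionally negative definite function with ψ(e) = 0. Then ψ(x) ≤ ψ̇(1)·|x| for every x ∈ F_∞, where ψ̇(1) is the common value of ψ on words of length 1. -/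
open scoped ComplexOrder

noncomputable section

/-- A function on a group is conditionally negative definite if it is hermitian
and the associated quadratic sums over tuples of coefficients summing to zero
are nonpositive (real) numbers. -/
def IsCondNegDef {G : Type*} [Group G] (ψ : G → ℂ) : Prop :=
  (∀ x : G, ψ x⁻¹ = (starRingEnd ℂ) (ψ x)) ∧
  ∀ (n : ℕ) (x : Fin n → G) (c : Fin n → ℂ), (∑ j, c j) = 0 →
    ∑ j, ∑ k, c j * (starRingEnd ℂ) (c k) * ψ ((x k)⁻¹ * x j) ≤ 0

/-!
By Schoenberg's theorem `exp (-s ψ)` is positive definite for every `s ≥ 0`. Evaluated on positive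
words with pairwise disjoint letters, it shows that `c k = exp (-s ψ̇ k)` is a positive semidefinite
Hankel sequence with `|c k| ≤ 1`. The second differences of such a sequence again form a positive
semidefinite Hankel sequence; its even terms are nonnegative and, by log-convexity and boundedness,
nonincreasing, and each odd term is dominated by the even term before it, so its partial sums are
nonnegative. Telescoping, `c k - c (k+1) ≤ c 0 - c 1`, hence
`1 - exp (-s ψ̇ n) ≤ n (1 - exp (-s ψ̇ 1)) ≤ n s ψ̇ 1`, and letting `s → 0` gives `ψ̇ n ≤ n ψ̇ 1`.
-/

open Finset Matrix Filter Topology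

theorem le_of_forall_one_sub_exp_neg_le {a b : ℝ}
    (h : ∀ s > 0, 1 - Real.exp (-(s * a)) ≤ s * b) : a ≤ b := by
  have hlim : Tendsto (fun s => a * Real.exp (-(s * a))) (𝓝[>] 0) (𝓝 a) := by
    have hcont : Continuous fun s => a * Real.exp (-(s * a)) := by fun_prop
    simpa using (hcont.tendsto 0).mono_left nhdsWithin_le_nhds
  refine le_of_tendsto hlim (eventually_nhdsWithin_of_forall fun s (hs : 0 < s) => ?_)
  have hexp : Real.exp (s * a) * Real.exp (-(s * a)) = 1 := by rw [← Real.exp_add]; simp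
  have hkey : s * (a * Real.exp (-(s * a))) ≤ 1 - Real.exp (-(s * a)) := by
    nlinarith [Real.add_one_le_exp (s * a), Real.exp_pos (-(s * a))]
  exact le_of_mul_le_mul_left (hkey.trans (h s hs)) hs

/-- A strict increase `a n < a (n+1)` would propagate, since log-convexity makes the ratios
`a (m+1) / a m` nondecreasing, and force geometric growth. -/
theorem antitone_of_sq_le_mul_of_bddAbove {a : ℕ → ℝ} (h0 : ∀ n, 0 ≤ a n)
    (hlog : ∀ n, a (n + 1) ^ 2 ≤ a n * a (n + 2)) (hbdd : BddAbove (Set.range a)) :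
    Antitone a := by
  refine antitone_nat_of_succ_le fun n => ?_
  by_contra! hlt
  have hpos : 0 < a n := by
    refine (h0 n).lt_of_ne fun hzero => ?_
    have := hlog n
    rw [← hzero, zero_mul] at this
    nlinarith
  set r := a (n + 1) / a n
  have hr : 1 < r := (one_lt_div hpos).2 hlt
  have hstep (m : ℕ) : 0 < a (n + m) ∧ r * a (n + m) ≤ a (n + m + 1) := by
    induction m with
    | zero => exact ⟨hpos, (div_mul_cancel₀ _ hpos.ne').le⟩
    | succ m ih =>
      obtain ⟨ih_pos, ih_step⟩ := ih
      have hlog' : a (n + (m + 1)) ^ 2 ≤ a (n + m) * a (n + (m + 1) + 1) := hlog (n + m)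
      have ih_step' : r * a (n + m) ≤ a (n + (m + 1)) := ih_step
      have hpos' : 0 < a (n + (m + 1)) := by nlinarith
      exact ⟨hpos', le_of_mul_le_mul_left (by nlinarith) ih_pos⟩
  obtain ⟨M, hM⟩ := hbdd
  obtain ⟨m, hm⟩ := pow_unbounded_of_one_lt (M / a n) hr
  have hgeom : r ^ m * a n ≤ a (n + m) :=
    geom_le (u := fun m => a (n + m)) (by positivity) m fun k _ => (hstep k).2
  have := hM ⟨n + m, rfl⟩
  rw [div_lt_iff₀ hpos] at hm
  linarith

/-- With `N` copies of every index the form of `K` is weighted by `N²`, the diagonal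
correction `D - K` only by `N`. -/
theorem sum_mul_mul_nonneg_of_copies {ι : Type*} [Fintype ι] [DecidableEq ι]
    (K : ι → ι → ℝ) (D : ι → ℝ)
    (h : ∀ (N : ℕ) (w : ι × Fin N → ℝ),
      0 ≤ ∑ a, ∑ b, w a * w b * if a = b then D a.1 else K a.1 b.1)
    (v : ι → ℝ) : 0 ≤ ∑ i, ∑ j, v i * v j * K i j := by
  set Q := ∑ i, ∑ j, v i * v j * K i j
  set E := ∑ i, v i ^ 2 * (D i - K i i)
  have hcopies (N : ℕ) : 0 ≤ N * (N * Q) + N * E := by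
    have hsplit (a b : ι × Fin N) : v a.1 * v b.1 * (if a = b then D a.1 else K a.1 b.1) =
        v a.1 * v b.1 * K a.1 b.1 + if a = b then v a.1 ^ 2 * (D a.1 - K a.1 a.1) else 0 := by
      split_ifs with hab
      · subst hab; ring
      · ring
    simpa only [hsplit, Finset.sum_add_distrib, Finset.sum_ite_eq, Finset.mem_univ, if_true,
      Fintype.sum_prod_type, Finset.sum_const, Finset.card_univ, Fintype.card_fin,
      nsmul_eq_mul, ← Finset.mul_sum] using h N fun a => v a.1
  have hlim : Tendsto (fun N : ℕ => Q + E / N) atTop (𝓝 Q) := by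
    simpa using tendsto_const_nhds.add (tendsto_const_div_atTop_nhds_zero_nat E)
  refine ge_of_tendsto hlim (eventually_atTop.2 ⟨1, fun N hN => ?_⟩)
  have hNpos : (0 : ℝ) < N := by exact_mod_cast hN
  calc 0 ≤ (N * (N * Q) + N * E) / N ^ 2 := div_nonneg (hcopies N) (by positivity)
    _ = Q + E / N := by field_simp

namespace Matrix.PosSemidef

variable {ι : Type*} [Fintype ι] {M : Matrix ι ι ℝ}

theorem sum_mul_mul_nonneg (hM : M.PosSemidef) (w : ι → ℝ) :
    0 ≤ ∑ a, ∑ b, w a * w b * M a b := by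
  simpa [dotProduct, mulVec, Finset.mul_sum, mul_comm, mul_left_comm] using
    hM.dotProduct_mulVec_nonneg w

theorem map_pow (hM : M.PosSemidef) (p : ℕ) : (M.map (· ^ p)).PosSemidef := by
  induction p with
  | zero =>
    have : M.map (· ^ 0) = vecMulVec (fun _ => 1) (star fun _ => 1) := by
      ext; simp [vecMulVec]
    exact this ▸ posSemidef_vecMulVec_self_star _
  | succ p ih =>
    have : M.map (· ^ (p + 1)) = M.map (· ^ p) ⊙ M := by
      ext; simp [pow_succ]
    exact this ▸ ih.hadamard hM

theorem map_exp (hM : M.PosSemidef) : (M.map Real.exp).PosSemidef := by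
  rw [posSemidef_iff_dotProduct_mulVec]
  refine ⟨hM.isHermitian.map _ fun _ => rfl, fun v => ?_⟩
  have hsum : HasSum (fun p : ℕ => star v ⬝ᵥ (M.map (· ^ p) *ᵥ v) / p.factorial)
      (star v ⬝ᵥ (M.map Real.exp *ᵥ v)) := by
    simp only [dotProduct, mulVec, map_apply, Finset.sum_div, Finset.mul_sum]
    refine hasSum_sum fun i _ => hasSum_sum fun j _ => ?_
    have h := (NormedSpace.expSeries_div_hasSum_exp (M i j)).mul_left (star v i * v j)
    rw [← Real.exp_eq_exp_ℝ] at h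
    simpa only [div_eq_mul_inv, mul_comm, mul_left_comm, mul_assoc] using h
  exact hsum.nonneg fun p => div_nonneg ((hM.map_pow p).dotProduct_mulVec_nonneg v) (by positivity)

end Matrix.PosSemidef

namespace IsCondNegDef

variable {G : Type*} [Group G] {ψ : G → ℝ}

theorem apply_inv (h : IsCondNegDef fun x => (ψ x : ℂ)) (x : G) : ψ x⁻¹ = ψ x := by
  simpa only [Complex.conj_ofReal, Complex.ofReal_inj] using h.1 x

theorem sum_mul_mul_nonpos (h : IsCondNegDef fun x => (ψ x : ℂ)) {ι : Type*} [Fintype ι]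
    (x : ι → G) (c : ι → ℝ) (hc : ∑ j, c j = 0) :
    ∑ j, ∑ k, c j * c k * ψ ((x k)⁻¹ * x j) ≤ 0 := by
  let e := (Fintype.equivFin ι).symm
  have hreal := h.2 _ (x ∘ e) (fun j => (c (e j) : ℂ)) (by
    rw [e.sum_comp (fun j => (c j : ℂ))]; exact_mod_cast hc)
  simp only [Function.comp_apply, Complex.conj_ofReal] at hreal
  rw [e.sum_comp (fun j => ∑ k, (c j : ℂ) * c (e k) * ψ ((x (e k))⁻¹ * x j))] at hreal
  simp only [fun j => e.sum_comp (fun k => (c j : ℂ) * c k * ψ ((x k)⁻¹ * x j))] at hreal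
  exact_mod_cast hreal

/-- Applied to the family extended by `1` with coefficient `-∑ j, v j`, the defining inequality
is the positivity of this kernel. -/
theorem posSemidef_kernel (h : IsCondNegDef fun x => (ψ x : ℂ)) (he : ψ 1 = 0)
    {ι : Type*} [Fintype ι] (x : ι → G) :
    (Matrix.of fun j k => ψ (x j) + ψ (x k) - ψ ((x k)⁻¹ * x j)).PosSemidef := by
  rw [posSemidef_iff_dotProduct_mulVec]
  refine ⟨?_, fun v => ?_⟩
  · ext j k
    simp [← h.apply_inv ((x k)⁻¹ * x j), add_comm]
  have hcnd := h.sum_mul_mul_nonpos (fun o : Option ι => o.elim 1 x)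
    (fun o => o.elim (-∑ j, v j) v) (by simp [Fintype.sum_option])
  have hAB : ∑ k, (-∑ j, v j) * v k * ψ (x k) = -((∑ j, v j) * ∑ k, v k * ψ (x k)) := by
    simp only [Finset.mul_sum, neg_mul, mul_assoc, Finset.sum_neg_distrib]
  simp only [Fintype.sum_option, Option.elim, he, h.apply_inv, inv_one, one_mul, mul_one,
    mul_zero, zero_add, Finset.sum_add_distrib, mul_comm (v _) (-_), hAB] at hcnd
  have hquad : star v ⬝ᵥ (of (fun j k => ψ (x j) + ψ (x k) - ψ ((x k)⁻¹ * x j)) *ᵥ v) =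
      ∑ j, ∑ k, (v j * ψ (x j) * v k + v j * (v k * ψ (x k)) - v j * v k * ψ ((x k)⁻¹ * x j)) := by
    simp only [dotProduct, mulVec, of_apply, star_trivial, Finset.mul_sum]
    exact Finset.sum_congr rfl fun j _ => Finset.sum_congr rfl fun k _ => by ring
  rw [hquad]
  simp only [Finset.sum_add_distrib, Finset.sum_sub_distrib, ← Finset.sum_mul_sum]
  linarith

theorem nonneg (h : IsCondNegDef fun x => (ψ x : ℂ)) (he : ψ 1 = 0) (x : G) : 0 ≤ ψ x := by
  have := (h.posSemidef_kernel he fun _ : Unit => x).diag_nonneg (i := ())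
  simp only [of_apply, inv_mul_cancel, he] at this
  linarith

theorem posSemidef_exp_neg_mul (h : IsCondNegDef fun x => (ψ x : ℂ)) (he : ψ 1 = 0)
    {ι : Type*} [Fintype ι] (x : ι → G) {s : ℝ} (hs : 0 ≤ s) :
    (Matrix.of fun j k => Real.exp (-(s * ψ ((x k)⁻¹ * x j)))).PosSemidef := by
  let u j := Real.exp (-(s * ψ (x j)))
  have hfactor : (Matrix.of fun j k => Real.exp (-(s * ψ ((x k)⁻¹ * x j)))) =
      (s • Matrix.of fun j k => ψ (x j) + ψ (x k) - ψ ((x k)⁻¹ * x j)).map Real.exp ⊙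
        vecMulVec u (star u) := by
    ext j k
    simp only [u, of_apply, hadamard_apply, map_apply, Matrix.smul_apply, vecMulVec_apply,
      star_trivial, smul_eq_mul, ← Real.exp_add]
    ring_nf
  rw [hfactor]
  exact ((h.posSemidef_kernel he x).smul hs).map_exp.hadamard (posSemidef_vecMulVec_self_star u)

end IsCondNegDef

def IsHankelPosSemidef (c : ℕ → ℝ) : Prop :=
  ∀ (ι : Type) [Fintype ι] (f : ι → ℕ) (v : ι → ℝ), 0 ≤ ∑ i, ∑ j, v i * v j * c (f i + f j)

namespace IsHankelPosSemidef

variable {c : ℕ → ℝ}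

theorem quadratic_nonneg (hc : IsHankelPosSemidef c) (i j : ℕ) (a b : ℝ) :
    0 ≤ c (i + i) * (a * a) + 2 * c (i + j) * a * b + c (j + j) * (b * b) := by
  have := hc (Fin 2) ![i, j] ![a, b]
  simp only [Fin.sum_univ_two, Matrix.cons_val_zero, Matrix.cons_val_one] at this
  rw [add_comm j i] at this
  linarith

theorem nonneg_add_self (hc : IsHankelPosSemidef c) (i : ℕ) : 0 ≤ c (i + i) := by
  simpa using hc.quadratic_nonneg i i 1 0

theorem sq_le_mul (hc : IsHankelPosSemidef c) (i j : ℕ) :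
    c (i + j) ^ 2 ≤ c (i + i) * c (j + j) := by
  have := discrim_le_zero fun t => by simpa using hc.quadratic_nonneg i j t 1
  rw [discrim] at this
  linarith

theorem second_difference (hc : IsHankelPosSemidef c) :
    IsHankelPosSemidef fun k => c k - 2 * c (k + 1) + c (k + 2) := by
  intro ι _ f v
  have := hc (ι × Bool) (fun p => f p.1 + p.2.toNat) (fun p => if p.2 then -v p.1 else v p.1)
  simp only [Fintype.sum_prod_type, Fintype.sum_bool, ← Finset.sum_add_distrib] at this
  convert this using 1
  refine Finset.sum_congr rfl fun i _ => Finset.sum_congr rfl fun j _ => ?_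
  simp only [Bool.toNat_true, Bool.toNat_false, Bool.false_eq_true, if_true, if_false, add_zero]
  ring_nf

theorem antitone_add_self (hc : IsHankelPosSemidef c)
    (hbdd : BddAbove (Set.range fun k => c (k + k))) : Antitone fun k => c (k + k) := by
  refine antitone_of_sq_le_mul_of_bddAbove (fun k => hc.nonneg_add_self k) (fun k => ?_) hbdd
  have := hc.sq_le_mul k (k + 2)
  rwa [show k + (k + 2) = k + 1 + (k + 1) by ring] at this

theorem add_self_add_succ_nonneg (hc : IsHankelPosSemidef c)
    (hbdd : BddAbove (Set.range fun k => c (k + k))) (i : ℕ) :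
    0 ≤ c (i + i) + c (i + i + 1) := by
  have hsq := hc.sq_le_mul i (i + 1)
  rw [show i + (i + 1) = i + i + 1 by ring] at hsq
  have hanti : c (i + 1 + (i + 1)) ≤ c (i + i) := hc.antitone_add_self hbdd (Nat.le_succ i)
  have hii := hc.nonneg_add_self i
  have hsq' : c (i + i + 1) ^ 2 ≤ c (i + i) ^ 2 := by
    nlinarith [hc.nonneg_add_self (i + 1)]
  linarith [(abs_le_of_sq_le_sq' hsq' hii).1]

theorem sum_range_nonneg (hc : IsHankelPosSemidef c)
    (hbdd : BddAbove (Set.range fun k => c (k + k))) (n : ℕ) : 0 ≤ ∑ k ∈ range n, c k := by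
  have heven (m : ℕ) : 0 ≤ ∑ k ∈ range (m + m), c k := by
    induction m with
    | zero => simp
    | succ m ih =>
      rw [show m + 1 + (m + 1) = m + m + 1 + 1 by ring, sum_range_succ, sum_range_succ]
      linarith [hc.add_self_add_succ_nonneg hbdd m]
  obtain ⟨m, rfl | rfl⟩ := Nat.even_or_odd' n
  · rw [two_mul]
    exact heven m
  · rw [two_mul, sum_range_succ]
    linarith [heven m, hc.nonneg_add_self m]

theorem sub_succ_le (hc : IsHankelPosSemidef c) {M : ℝ} (hM : ∀ k, |c k| ≤ M) (k : ℕ) :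
    c k - c (k + 1) ≤ c 0 - c 1 := by
  have hbdd : BddAbove (Set.range fun k => c (k + k) - 2 * c (k + k + 1) + c (k + k + 2)) := by
    refine ⟨4 * M, ?_⟩
    rintro _ ⟨k, rfl⟩
    linarith [abs_le.1 (hM (k + k)), abs_le.1 (hM (k + k + 1)), abs_le.1 (hM (k + k + 2))]
  have htel : ∑ j ∈ range k, (c j - 2 * c (j + 1) + c (j + 2)) =
      (c (k + 1) - c k) - (c 1 - c 0) := by
    rw [← Finset.sum_range_sub (fun j => c (j + 1) - c j)]
    exact sum_congr rfl fun j _ => by ring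
  linarith [hc.second_difference.sum_range_nonneg hbdd k]

theorem sub_le_mul (hc : IsHankelPosSemidef c) {M : ℝ} (hM : ∀ k, |c k| ≤ M) (n : ℕ) :
    c 0 - c n ≤ n * (c 0 - c 1) :=
  calc c 0 - c n = ∑ k ∈ range n, (c k - c (k + 1)) := (Finset.sum_range_sub' c n).symm
    _ ≤ ∑ k ∈ range n, (c 0 - c 1) := sum_le_sum fun k _ => hc.sub_succ_le hM k
    _ = n * (c 0 - c 1) := by rw [sum_const, card_range, nsmul_eq_mul]

end IsHankelPosSemidef

theorem wordLength_inv_mul_of_disjoint {α : Type*} [DecidableEq α] {l₁ l₂ : List α}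
    (h : l₁.Disjoint l₂) :
    wordLength ((FreeGroup.mk (l₁.map (·, true)))⁻¹ * FreeGroup.mk (l₂.map (·, true))) =
      l₁.length + l₂.length := by
  rw [FreeGroup.inv_mk, FreeGroup.mul_mk, wordLength, FreeGroup.toWord_mk,
    FreeGroup.IsReduced.reduce_eq]
  · simp [FreeGroup.invRev]
  refine (List.pairwise_of_forall_mem_list ?_).isChain
  simp only [FreeGroup.invRev, List.mem_append, List.mem_reverse, List.map_map, List.mem_map]
  rintro _ (⟨a, ha, rfl⟩ | ⟨a, ha, rfl⟩) _ (⟨b, hb, rfl⟩ | ⟨b, hb, rfl⟩) hab <;>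
    simp_all [List.Disjoint]

theorem isHankelPosSemidef_exp_neg_mul {ψ : FreeGroup ℕ → ℝ} {ψd : ℕ → ℝ}
    (hcnd : IsCondNegDef fun x => (ψ x : ℂ)) (he : ψ 1 = 0)
    (hrad : ∀ x, ψ x = ψd (wordLength x)) {s : ℝ} (hs : 0 ≤ s) :
    IsHankelPosSemidef fun k => Real.exp (-(s * ψd k)) := by
  classical
  intro ι _ f v
  refine sum_mul_mul_nonneg_of_copies _ (fun _ => 1) (fun N w => ?_) v
  obtain ⟨letter, hletter⟩ := Countable.exists_injective_nat ((ι × Fin N) × ℕ)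
  let x (a : ι × Fin N) : FreeGroup ℕ :=
    FreeGroup.mk (((List.range (f a.1)).map fun t => letter (a, t)).map (·, true))
  have hlen {a b : ι × Fin N} (hab : a ≠ b) : wordLength ((x b)⁻¹ * x a) = f a.1 + f b.1 := by
    rw [wordLength_inv_mul_of_disjoint, List.length_map, List.length_map, List.length_range,
      List.length_range, add_comm]
    simp only [List.disjoint_left, List.mem_map, List.mem_range]
    rintro _ ⟨t, -, rfl⟩ ⟨t', -, heq⟩
    exact hab (congrArg Prod.fst (hletter heq))
  convert (hcnd.posSemidef_exp_neg_mul he x hs).sum_mul_mul_nonneg w using 4 with a _ b _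
  split_ifs with hab
  · simp [hab, he]
  · simp [hrad, hlen hab]

theorem condNegDef_linear_bound_infinite
    (ψ : FreeGroup ℕ → ℝ) (ψd : ℕ → ℝ)
    (hrad : ∀ x : FreeGroup ℕ, ψ x = ψd (wordLength x))
    (hcnd : IsCondNegDef (fun x : FreeGroup ℕ => (ψ x : ℂ)))
    (hψe : ψ 1 = 0) (x : FreeGroup ℕ) :
    ψ x ≤ ψd 1 * (wordLength x : ℝ) := by
  have hψd0 : ψd 0 = 0 := by simpa [hrad, wordLength] using hψe
  have hψd_nonneg (k : ℕ) : 0 ≤ ψd k := by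
    obtain ⟨y, rfl⟩ := FreeGroup.norm_surjective (α := ℕ) k
    exact hrad y ▸ hcnd.nonneg hψe y
  rw [hrad, mul_comm]
  refine le_of_forall_one_sub_exp_neg_le fun s hs => ?_
  have hbound (k : ℕ) : |Real.exp (-(s * ψd k))| ≤ 1 := by
    rw [abs_of_pos (Real.exp_pos _), Real.exp_le_one_iff, neg_nonpos]
    exact mul_nonneg hs.le (hψd_nonneg k)
  have hlin := (isHankelPosSemidef_exp_neg_mul hcnd hψe hrad hs.le).sub_le_mul hbound
    (wordLength x)
  simp only [hψd0, mul_zero, neg_zero, Real.exp_zero] at hlin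
  calc 1 - Real.exp (-(s * ψd (wordLength x)))
      ≤ wordLength x * (1 - Real.exp (-(s * ψd 1))) := hlin
    _ ≤ wordLength x * (s * ψd 1) := by
      gcongr
      linarith [Real.add_one_le_exp (-(s * ψd 1))]
    _ = s * (wordLength x * ψd 1) := by ring
end
end
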